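/- Let n ≥ 1, α ∈ ℝ, and let f : ℝⁿ → ℝ be locally integrable with finite Campanato norm ‖f‖_{E^{α,1}}. Let B = B(x₀,r) be a ball, x ∈ B, and t > 8r. Then ∫_{{y : 8r ≤ |x−y| < t}} |f(y) − f_B| / |x−y|^{n−1} dy is at most c t r^α ‖f‖_{E^{α,1}} if α < 0, at most c t log(t/r) ‖f‖_{E^{α,1}} if α = 0, and at most c t^{1+α} ‖f‖_{E^{α,1}} if α > 0, with c depending only on n and α. -/

import Mathlib

open MeasureTheory Metric ENNReal

noncomputable def ballAvg (n : ℕ) (f : EuclideanSpace ℝ (Fin n) → ℝ)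
    (c : EuclideanSpace ℝ (Fin n)) (r : ℝ) : ℝ :=
  (volume (closedBall c r)).toReal⁻¹ * ∫ y in closedBall c r, f y

noncomputable def bmoNorm (n : ℕ) (f : EuclideanSpace ℝ (Fin n) → ℝ) : ℝ≥0∞ :=
  ⨆ (c : EuclideanSpace ℝ (Fin n)) (r : ℝ) (_ : 0 < r),
    ENNReal.ofReal ((volume (closedBall c r)).toReal⁻¹ *
      ∫ y in closedBall c r, |f y - ballAvg n f c r|)

noncomputable def campanatoNorm (n : ℕ) (α p : ℝ) (f : EuclideanSpace ℝ (Fin n) → ℝ) : ℝ≥0∞ :=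
  ⨆ (c : EuclideanSpace ℝ (Fin n)) (r : ℝ) (_ : 0 < r),
    ENNReal.ofReal ((volume (closedBall c r)).toReal ^ (-(α / n)) *
      ((volume (closedBall c r)).toReal⁻¹ *
        ∫ y in closedBall c r, |f y - ballAvg n f c r| ^ p) ^ (1 / p))

noncomputable def campanato1Norm (n : ℕ) (α : ℝ) (f : EuclideanSpace ℝ (Fin n) → ℝ) : ℝ≥0∞ :=
  ⨆ (c : EuclideanSpace ℝ (Fin n)) (r : ℝ) (_ : 0 < r),
    ENNReal.ofReal ((volume (closedBall c r)).toReal ^ (-(α / n)) *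
      ((volume (closedBall c r)).toReal⁻¹ *
        ∫ y in closedBall c r, |f y - ballAvg n f c r|))

noncomputable def lipNorm (n : ℕ) (γ : ℝ) (f : EuclideanSpace ℝ (Fin n) → ℝ) : ℝ≥0∞ :=
  ⨆ (x : EuclideanSpace ℝ (Fin n)) (y : EuclideanSpace ℝ (Fin n)) (_ : x ≠ y),
    ENNReal.ofReal (|f x - f y| / ‖x - y‖ ^ γ)

/-!
Split the annulus into the dyadic shells `2ʲ r ≤ |x - y| < 2ʲ⁺¹ r`. On such a shell the kernel is
at most `(2ʲ r)^(1-n)`, so the shell contributes at most `(2ʲ r)^(1-n) ∫_{B(x, 2ʲ⁺¹ r)} |f - f_B|`.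
The Campanato condition bounds the mean oscillation of `f` on a ball of radius `ρ` by `ρ^α ‖f‖`
(up to a constant), and hence also the jumps of the averages along the doubling chain
`B ⊆ B(x, 2r) ⊆ B(x, 4r) ⊆ ⋯`. So the `j`-th shell contributes `≲ 2ʲ r ∑_{k ≤ j+1} (2ᵏ r)^α ‖f‖`,
and summing over the shells below `t` leaves a double geometric sum, which is `≲ t r^α`,
`t log (t / r)` or `t^(1+α)` according to the sign of `α`.
-/

open Finset

lemma exists_pow_two_mul_le_lt {r t : ℝ} (hr : 0 < r) (hrt : r ≤ t) :
    ∃ J : ℕ, 2 ^ J * r ≤ t ∧ t < 2 ^ (J + 1) * r := by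
  obtain ⟨J, hJ, hJ'⟩ := exists_nat_pow_near ((one_le_div hr).2 hrt) one_lt_two
  exact ⟨J, (le_div_iff₀ hr).1 hJ, (div_lt_iff₀ hr).1 hJ'⟩

lemma exists_mem_dyadic_shell {r s t : ℝ} {J : ℕ} (hr : 0 < r) (hrs : r ≤ s) (hst : s < t)
    (htJ : t ≤ 2 ^ (J + 1) * r) : ∃ j < J + 1, 2 ^ j * r ≤ s ∧ s < 2 * (2 ^ j * r) := by
  obtain ⟨j, hjs, hsj⟩ := exists_pow_two_mul_le_lt hr hrs
  rw [pow_succ, mul_comm _ 2, mul_assoc] at hsj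
  refine ⟨j, (pow_lt_pow_iff_right₀ (one_lt_two : (1 : ℝ) < 2)).1 ?_, hjs, hsj⟩
  exact lt_of_mul_lt_mul_right ((hjs.trans_lt hst).trans_le htJ) hr.le

lemma rpow_two_pow_mul (α : ℝ) (k : ℕ) {r : ℝ} (hr : 0 ≤ r) :
    ((2 : ℝ) ^ k * r) ^ α = ((2 : ℝ) ^ α) ^ k * r ^ α := by
  rw [Real.mul_rpow (by positivity) hr, Real.rpow_pow_comm zero_le_two]

lemma sum_rpow_two_pow_mul (α : ℝ) {r : ℝ} (hr : 0 ≤ r) (m : ℕ) :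
    ∑ k ∈ range m, ((2 : ℝ) ^ k * r) ^ α = r ^ α * ∑ k ∈ range m, ((2 : ℝ) ^ α) ^ k := by
  rw [mul_sum]
  exact sum_congr rfl fun k _ => by rw [rpow_two_pow_mul α k hr, mul_comm]

lemma geom_sum_le_pow {Q : ℝ} (hQ : 2 ≤ Q) (m : ℕ) : ∑ j ∈ range m, Q ^ j ≤ Q ^ m := by
  rw [geom_sum_eq (by linarith), div_le_iff₀ (by linarith)]
  nlinarith [one_le_pow₀ (by linarith : 1 ≤ Q) (n := m)]

lemma setLIntegral_biUnion_finset_le {ι X : Type*} [MeasurableSpace X] (μ : Measure X)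
    (s : Finset ι) (t : ι → Set X) (g : X → ℝ≥0∞) :
    ∫⁻ y in ⋃ i ∈ s, t i, g y ∂μ ≤ ∑ i ∈ s, ∫⁻ y in t i, g y ∂μ :=
  calc ∫⁻ y in ⋃ i ∈ s, t i, g y ∂μ = ∫⁻ y in ⋃ i : s, t i, g y ∂μ := by rw [Set.iUnion_subtype]
    _ ≤ ∑' i : s, ∫⁻ y in t i, g y ∂μ := lintegral_iUnion_le _ _
    _ = ∑ i ∈ s, ∫⁻ y in t i, g y ∂μ := s.tsum_subtype fun i => ∫⁻ y in t i, g y ∂μ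

noncomputable def unitBallVolume (n : ℕ) : ℝ :=
  (volume (ball (0 : EuclideanSpace ℝ (Fin n)) 1)).toReal

noncomputable def meanOscillation (n : ℕ) (f : EuclideanSpace ℝ (Fin n) → ℝ)
    (c : EuclideanSpace ℝ (Fin n)) (r : ℝ) : ℝ :=
  (volume (closedBall c r)).toReal⁻¹ * ∫ y in closedBall c r, |f y - ballAvg n f c r|

section Balls

variable {n : ℕ} {f : EuclideanSpace ℝ (Fin n) → ℝ} {c : EuclideanSpace ℝ (Fin n)} {ρ : ℝ}

lemma unitBallVolume_pos (n : ℕ) : 0 < unitBallVolume n :=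
  ENNReal.toReal_pos (measure_ball_pos volume _ one_pos).ne' measure_ball_lt_top.ne

lemma volume_closedBall_toReal (c : EuclideanSpace ℝ (Fin n)) (hρ : 0 ≤ ρ) :
    (volume (closedBall c ρ)).toReal = ρ ^ n * unitBallVolume n := by
  rw [Measure.addHaar_closedBall volume c hρ, ENNReal.toReal_mul,
    ENNReal.toReal_ofReal (by positivity), finrank_euclideanSpace_fin]
  rfl

lemma volume_closedBall_toReal_pos (c : EuclideanSpace ℝ (Fin n)) (hρ : 0 < ρ) :
    0 < (volume (closedBall c ρ)).toReal := by
  rw [volume_closedBall_toReal c hρ.le]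
  exact mul_pos (pow_pos hρ n) (unitBallVolume_pos n)

lemma meanOscillation_nonneg (f : EuclideanSpace ℝ (Fin n) → ℝ) (c : EuclideanSpace ℝ (Fin n))
    (ρ : ℝ) : 0 ≤ meanOscillation n f c ρ :=
  mul_nonneg (inv_nonneg.2 ENNReal.toReal_nonneg) (integral_nonneg fun _ => abs_nonneg _)

lemma abs_ballAvg_sub_le (hf : IntegrableOn f (closedBall c ρ)) (hρ : 0 < ρ) (a : ℝ) :
    |ballAvg n f c ρ - a| ≤
      (volume (closedBall c ρ)).toReal⁻¹ * ∫ y in closedBall c ρ, |f y - a| := by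
  have hV := volume_closedBall_toReal_pos c hρ
  have hdiff : ballAvg n f c ρ - a =
      (volume (closedBall c ρ)).toReal⁻¹ * ∫ y in closedBall c ρ, (f y - a) := by
    rw [integral_sub hf (integrableOn_const measure_closedBall_lt_top.ne), setIntegral_const,
      smul_eq_mul, measureReal_def, ballAvg]
    field_simp
  rw [hdiff, abs_mul, abs_of_pos (inv_pos.2 hV)]
  gcongr
  exact abs_integral_le_integral_abs

lemma abs_ballAvg_sub_ballAvg_le (hloc : LocallyIntegrable f volume)
    {c₁ c₂ : EuclideanSpace ℝ (Fin n)} {ρ₁ ρ₂ : ℝ} (hρ₁ : 0 < ρ₁) (hρ₂ : ρ₂ ≤ 2 * ρ₁)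
    (hsub : closedBall c₁ ρ₁ ⊆ closedBall c₂ ρ₂) :
    |ballAvg n f c₁ ρ₁ - ballAvg n f c₂ ρ₂| ≤ 2 ^ n * meanOscillation n f c₂ ρ₂ := by
  set V₁ := (volume (closedBall c₁ ρ₁)).toReal
  set V₂ := (volume (closedBall c₂ ρ₂)).toReal
  set a₂ := ballAvg n f c₂ ρ₂
  have hV₁ : 0 < V₁ := volume_closedBall_toReal_pos c₁ hρ₁
  have hV₁₂ : V₁ ≤ V₂ :=
    ENNReal.toReal_mono measure_closedBall_lt_top.ne (measure_mono hsub)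
  have hV₂ : V₂ ≤ 2 ^ n * V₁ := by
    calc V₂ ≤ (volume (closedBall c₂ (2 * ρ₁))).toReal :=
          ENNReal.toReal_mono measure_closedBall_lt_top.ne
            (measure_mono (closedBall_subset_closedBall hρ₂))
      _ = 2 ^ n * V₁ := by
          rw [volume_closedBall_toReal _ (by positivity),
            show V₁ = ρ₁ ^ n * unitBallVolume n from volume_closedBall_toReal _ hρ₁.le,
            mul_pow, mul_assoc]
  have hint : IntegrableOn (fun y => |f y - a₂|) (closedBall c₂ ρ₂) :=
    ((hloc.integrableOn_isCompact (isCompact_closedBall c₂ ρ₂)).sub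
      (integrableOn_const measure_closedBall_lt_top.ne)).abs
  calc |ballAvg n f c₁ ρ₁ - a₂| ≤ V₁⁻¹ * ∫ y in closedBall c₁ ρ₁, |f y - a₂| :=
        abs_ballAvg_sub_le (hloc.integrableOn_isCompact (isCompact_closedBall c₁ ρ₁)) hρ₁ a₂
    _ ≤ V₁⁻¹ * ∫ y in closedBall c₂ ρ₂, |f y - a₂| := by
        gcongr ?_ * ?_
        exact setIntegral_mono_set hint (ae_of_all _ fun _ => abs_nonneg _) hsub.eventuallyLE
    _ = V₁⁻¹ * V₂ * meanOscillation n f c₂ ρ₂ := by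
        rw [meanOscillation, ← mul_assoc, mul_assoc V₁⁻¹, mul_inv_cancel₀ (hV₁.trans_le hV₁₂).ne',
          mul_one]
    _ ≤ 2 ^ n * meanOscillation n f c₂ ρ₂ := by
        gcongr
        · exact meanOscillation_nonneg f c₂ ρ₂
        · rw [inv_mul_le_iff₀ hV₁, mul_comm]
          exact hV₂

lemma lintegral_shell_le (hn : 1 ≤ n) (hloc : LocallyIntegrable f volume)
    (x : EuclideanSpace ℝ (Fin n)) (hρ : 0 < ρ) (b : ℝ) :
    ∫⁻ y in {y | ρ ≤ ‖x - y‖ ∧ ‖x - y‖ < 2 * ρ},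
        ENNReal.ofReal (|f y - b| / ‖x - y‖ ^ ((n : ℝ) - 1)) ≤
      ENNReal.ofReal (2 ^ n * unitBallVolume n * ρ *
        (meanOscillation n f x (2 * ρ) + |ballAvg n f x (2 * ρ) - b|)) := by
  set a := ballAvg n f x (2 * ρ)
  set V := (volume (closedBall x (2 * ρ))).toReal
  have hV : V = 2 ^ n * ρ ^ n * unitBallVolume n :=
    (volume_closedBall_toReal x (by positivity)).trans (by rw [mul_pow])
  have hVpos : 0 < V := volume_closedBall_toReal_pos x (by positivity)
  have hf : IntegrableOn f (closedBall x (2 * ρ)) :=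
    hloc.integrableOn_isCompact (isCompact_closedBall _ _)
  have hconst (c : ℝ) : IntegrableOn (fun _ => c) (closedBall x (2 * ρ)) :=
    integrableOn_const measure_closedBall_lt_top.ne
  have hdevInt (c : ℝ) : IntegrableOn (fun y => |f y - c|) (closedBall x (2 * ρ)) :=
    (hf.sub (hconst c)).abs
  have hdev : ∫ y in closedBall x (2 * ρ), |f y - b| ≤
      V * (meanOscillation n f x (2 * ρ) + |a - b|) :=
    calc ∫ y in closedBall x (2 * ρ), |f y - b|
        ≤ ∫ y in closedBall x (2 * ρ), (|f y - a| + |a - b|) :=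
          setIntegral_mono (hdevInt b) ((hdevInt a).add (hconst _))
            fun y => abs_sub_le _ _ _
      _ = V * (meanOscillation n f x (2 * ρ) + |a - b|) := by
          rw [integral_add (hdevInt a) (hconst _), setIntegral_const, smul_eq_mul,
            measureReal_def, meanOscillation, mul_add, ← mul_assoc, mul_inv_cancel₀ hVpos.ne',
            one_mul]
  have hexp : (0 : ℝ) ≤ n - 1 := by
    rw [sub_nonneg]
    exact_mod_cast hn
  have hshell : MeasurableSet {y | ρ ≤ ‖x - y‖ ∧ ‖x - y‖ < 2 * ρ} := by
    measurability
  calc ∫⁻ y in {y | ρ ≤ ‖x - y‖ ∧ ‖x - y‖ < 2 * ρ},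
        ENNReal.ofReal (|f y - b| / ‖x - y‖ ^ ((n : ℝ) - 1))
      ≤ ∫⁻ y in closedBall x (2 * ρ), ENNReal.ofReal (|f y - b| / ρ ^ ((n : ℝ) - 1)) := by
        refine (setLIntegral_mono' hshell fun y hy => ENNReal.ofReal_le_ofReal ?_).trans
          (lintegral_mono_set fun y hy => ?_)
        · gcongr
          exact hy.1
        · rw [mem_closedBall, dist_comm, dist_eq_norm]
          exact hy.2.le
    _ = ENNReal.ofReal ((∫ y in closedBall x (2 * ρ), |f y - b|) / ρ ^ ((n : ℝ) - 1)) := by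
        rw [← integral_div, ofReal_integral_eq_lintegral_ofReal
          ((hdevInt b).div_const _) (ae_of_all _ fun _ => by positivity)]
    _ ≤ _ := by
        refine ENNReal.ofReal_le_ofReal ((div_le_iff₀ (by positivity)).2 (hdev.trans_eq ?_))
        rw [hV, Real.rpow_sub hρ, Real.rpow_natCast, Real.rpow_one]
        field_simp

end Balls

section Campanato

variable {n : ℕ} {f : EuclideanSpace ℝ (Fin n) → ℝ} {x x₀ : EuclideanSpace ℝ (Fin n)} {α r ρ : ℝ}

lemma meanOscillation_le_of_campanato1Norm_ne_top (hn : n ≠ 0) (hf : campanato1Norm n α f ≠ ⊤)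
    (c : EuclideanSpace ℝ (Fin n)) (hρ : 0 < ρ) :
    meanOscillation n f c ρ ≤
      unitBallVolume n ^ (α / n) * ρ ^ α * (campanato1Norm n α f).toReal := by
  set V := (volume (closedBall c ρ)).toReal
  have hV : 0 < V := volume_closedBall_toReal_pos c hρ
  -- the term of the supremum defining `campanato1Norm` at the ball `closedBall c ρ`
  have hnorm : V ^ (-(α / n)) * meanOscillation n f c ρ ≤ (campanato1Norm n α f).toReal :=
    (ENNReal.ofReal_le_iff_le_toReal hf).1 <|
      le_iSup_of_le c <| le_iSup_of_le ρ <| le_iSup_of_le hρ le_rfl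
  have hVα : V ^ (α / n) = unitBallVolume n ^ (α / n) * ρ ^ α := by
    rw [show V = ρ ^ n * unitBallVolume n from volume_closedBall_toReal c hρ.le,
      Real.mul_rpow (by positivity) (unitBallVolume_pos n).le, ← Real.rpow_natCast,
      ← Real.rpow_mul hρ.le, mul_div_cancel₀ _ (Nat.cast_ne_zero.2 hn), mul_comm]
  calc meanOscillation n f c ρ = V ^ (α / n) * (V ^ (-(α / n)) * meanOscillation n f c ρ) := by
        rw [← mul_assoc, ← Real.rpow_add hV, add_neg_cancel, Real.rpow_zero, one_mul]
    _ ≤ V ^ (α / n) * (campanato1Norm n α f).toReal := by gcongr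
    _ = _ := by rw [hVα]

lemma abs_ballAvg_dyadic_sub_ballAvg_le (hn : n ≠ 0) (hloc : LocallyIntegrable f volume)
    (hf : campanato1Norm n α f ≠ ⊤) (hr : 0 < r) (hx : x ∈ closedBall x₀ r) (m : ℕ) :
    |ballAvg n f x (2 ^ (m + 1) * r) - ballAvg n f x₀ r| ≤
      2 ^ n * (unitBallVolume n ^ (α / n) * (campanato1Norm n α f).toReal) *
        ∑ k ∈ range (m + 2), ((2 : ℝ) ^ k * r) ^ α := by
  set K := unitBallVolume n ^ (α / n) * (campanato1Norm n α f).toReal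
  have hosc (k : ℕ) : 2 ^ n * meanOscillation n f x (2 ^ k * r) ≤ 2 ^ n * K * (2 ^ k * r) ^ α :=
    (mul_le_mul_of_nonneg_left (meanOscillation_le_of_campanato1Norm_ne_top hn hf x
      (by positivity)) (by positivity)).trans_eq (by ring)
  induction m with
  | zero =>
    have hsub : closedBall x₀ r ⊆ closedBall x (2 ^ 1 * r) :=
      closedBall_subset_closedBall' (by linarith [mem_closedBall'.1 hx])
    have hK : 0 ≤ 2 ^ n * K * r ^ α := by
      have := unitBallVolume_pos n
      positivity
    rw [abs_sub_comm, sum_range_succ, sum_range_one, mul_add]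
    calc |ballAvg n f x₀ r - ballAvg n f x (2 ^ 1 * r)|
        ≤ 2 ^ n * meanOscillation n f x (2 ^ 1 * r) :=
          abs_ballAvg_sub_ballAvg_le hloc hr (by linarith) hsub
      _ ≤ 2 ^ n * K * (2 ^ 1 * r) ^ α := hosc 1
      _ ≤ _ := by simp only [pow_zero, one_mul]; linarith
  | succ m ih =>
    have hsub : closedBall x (2 ^ (m + 1) * r) ⊆ closedBall x (2 ^ (m + 2) * r) :=
      closedBall_subset_closedBall (by gcongr <;> norm_num)
    rw [sum_range_succ, mul_add]
    calc |ballAvg n f x (2 ^ (m + 2) * r) - ballAvg n f x₀ r|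
        ≤ |ballAvg n f x (2 ^ (m + 1) * r) - ballAvg n f x (2 ^ (m + 2) * r)| +
            |ballAvg n f x (2 ^ (m + 1) * r) - ballAvg n f x₀ r| := by
          rw [abs_sub_comm (ballAvg n f x (2 ^ (m + 1) * r))]
          exact abs_sub_le _ _ _
      _ ≤ 2 ^ n * meanOscillation n f x (2 ^ (m + 2) * r) +
            2 ^ n * K * ∑ k ∈ range (m + 2), ((2 : ℝ) ^ k * r) ^ α := by
          gcongr
          exact abs_ballAvg_sub_ballAvg_le hloc (by positivity) (by rw [pow_succ]; linarith) hsub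
      _ ≤ _ := by linarith [hosc (m + 2)]

end Campanato

noncomputable def annulusConst (n : ℕ) (α : ℝ) : ℝ :=
  2 ^ n * (1 + 2 ^ n) * unitBallVolume n * unitBallVolume n ^ (α / n)

lemma annulusConst_pos (n : ℕ) (α : ℝ) : 0 < annulusConst n α := by
  have := unitBallVolume_pos n
  unfold annulusConst
  positivity

/-- The `j`-th term is what the shell `2ʲ r ≤ |x - y| < 2ʲ⁺¹ r` contributes: its inner radius times
the Campanato bounds along the chain of balls `B(x, 2ᵏ r)`, `k ≤ j + 1`. -/
noncomputable def dyadicSum (α r : ℝ) (J : ℕ) : ℝ :=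
  ∑ j ∈ range (J + 1), 2 ^ j * r * ∑ k ∈ range (j + 2), ((2 : ℝ) ^ k * r) ^ α

section DyadicSum

variable {α r t : ℝ} {J : ℕ}

lemma dyadicSum_le_of_neg (hα : α < 0) (hr : 0 < r) (hJ : 2 ^ J * r ≤ t) :
    dyadicSum α r J ≤ 2 * (1 - 2 ^ α)⁻¹ * t * r ^ α := by
  set q : ℝ := 2 ^ α
  have hq : 0 < 1 - q := sub_pos.2 (Real.rpow_lt_one_of_one_lt_of_neg one_lt_two hα)
  calc dyadicSum α r J ≤ ∑ j ∈ range (J + 1), 2 ^ j * r * (r ^ α * (1 - q)⁻¹) := by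
        unfold dyadicSum
        gcongr with j
        rw [sum_rpow_two_pow_mul α hr.le, range_eq_Ico, ← one_div, ← pow_zero q]
        gcongr
        exact geom_sum_Ico_le_of_lt_one (by positivity) (by linarith)
    _ = (∑ j ∈ range (J + 1), (2 : ℝ) ^ j) * r * r ^ α * (1 - q)⁻¹ := by
        rw [sum_mul, sum_mul, sum_mul]
        exact sum_congr rfl fun j _ => by ring
    _ ≤ 2 ^ (J + 1) * r * r ^ α * (1 - q)⁻¹ := by
        gcongr
        exact geom_sum_le_pow le_rfl _
    _ = 2 * (2 ^ J * r) * r ^ α * (1 - q)⁻¹ := by ring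
    _ ≤ 2 * t * r ^ α * (1 - q)⁻¹ := by gcongr
    _ = 2 * (1 - q)⁻¹ * t * r ^ α := by ring

lemma dyadicSum_le_of_pos (hα : 0 < α) (hr : 0 < r) (hJ : 2 ^ J * r ≤ t) :
    dyadicSum α r J ≤ 2 * (2 ^ α) ^ 3 * (2 ^ α - 1)⁻¹ * t ^ (1 + α) := by
  set q : ℝ := 2 ^ α
  have hq : 1 < q := Real.one_lt_rpow one_lt_two hα
  have ht : 0 < t := lt_of_lt_of_le (by positivity) hJ
  calc dyadicSum α r J ≤ ∑ j ∈ range (J + 1), 2 ^ j * r * (r ^ α * (q ^ (j + 2) * (q - 1)⁻¹)) := by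
        unfold dyadicSum
        gcongr with j
        rw [sum_rpow_two_pow_mul α hr.le, geom_sum_eq hq.ne', div_eq_mul_inv]
        gcongr
        linarith
    _ = q ^ 2 * (q - 1)⁻¹ * (r * r ^ α) * ∑ j ∈ range (J + 1), (2 * q) ^ j := by
        rw [mul_sum]
        exact sum_congr rfl fun j _ => by ring
    _ ≤ q ^ 2 * (q - 1)⁻¹ * (r * r ^ α) * (2 * q) ^ (J + 1) := by
        gcongr
        exact geom_sum_le_pow (by linarith) _
    _ = q ^ 2 * (q - 1)⁻¹ * (2 ^ (J + 1) * r * (2 ^ (J + 1) * r) ^ α) := by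
        rw [rpow_two_pow_mul α _ hr.le, mul_pow]
        ring
    _ ≤ q ^ 2 * (q - 1)⁻¹ * (2 * t * (2 * t) ^ α) := by
        have hJ' : 2 ^ (J + 1) * r ≤ 2 * t := by rw [pow_succ]; linarith
        have : 0 < q - 1 := by linarith
        gcongr
    _ = 2 * q ^ 3 * (q - 1)⁻¹ * t ^ (1 + α) := by
        rw [Real.mul_rpow zero_le_two ht.le, Real.rpow_add ht, Real.rpow_one]
        ring

lemma dyadicSum_zero_le (hr : 0 < r) (h8 : 8 * r < t) (hJ : 2 ^ J * r ≤ t)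
    (hJ' : t < 2 ^ (J + 1) * r) : dyadicSum 0 r J ≤ 6 * t * Real.log (t / r) := by
  have hJ3 : 3 ≤ J := by
    have : (2 : ℝ) ^ 3 < 2 ^ (J + 1) := lt_of_mul_lt_mul_right (by linarith) hr.le
    have := (pow_lt_pow_iff_right₀ (one_lt_two : (1 : ℝ) < 2)).1 this
    omega
  have hlog : J * Real.log 2 ≤ Real.log (t / r) := by
    rw [← Real.log_pow]
    exact Real.log_le_log (by positivity) ((le_div_iff₀ hr).2 hJ)
  have hJlog : (J : ℝ) + 2 ≤ 3 * Real.log (t / r) := by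
    have hJ3' : (3 : ℝ) ≤ J := by exact_mod_cast hJ3
    nlinarith [Real.log_two_gt_d9]
  calc dyadicSum 0 r J = ∑ j ∈ range (J + 1), 2 ^ j * r * ((j : ℝ) + 2) := by
        simp only [dyadicSum, Real.rpow_zero, sum_const, card_range, nsmul_eq_mul, mul_one,
          Nat.cast_add, Nat.cast_ofNat]
    _ ≤ ∑ j ∈ range (J + 1), 2 ^ j * r * ((J : ℝ) + 2) := by
        gcongr with j hj
        exact_mod_cast Nat.lt_succ_iff.1 (mem_range.1 hj)
    _ = (∑ j ∈ range (J + 1), (2 : ℝ) ^ j) * r * ((J : ℝ) + 2) := by rw [sum_mul, sum_mul]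
    _ ≤ 2 ^ (J + 1) * r * ((J : ℝ) + 2) := by
        gcongr
        exact geom_sum_le_pow le_rfl _
    _ = 2 * (2 ^ J * r) * ((J : ℝ) + 2) := by ring
    _ ≤ 2 * t * (3 * Real.log (t / r)) := by gcongr; linarith
    _ = 6 * t * Real.log (t / r) := by ring

end DyadicSum

section Annulus

variable {n : ℕ} {f : EuclideanSpace ℝ (Fin n) → ℝ} {x x₀ : EuclideanSpace ℝ (Fin n)} {α r : ℝ}

lemma lintegral_dyadic_shell_le (hn : 1 ≤ n) (hloc : LocallyIntegrable f volume)
    (hf : campanato1Norm n α f ≠ ⊤) (hr : 0 < r) (hx : x ∈ closedBall x₀ r) (j : ℕ) :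
    ∫⁻ y in {y | 2 ^ j * r ≤ ‖x - y‖ ∧ ‖x - y‖ < 2 * (2 ^ j * r)},
        ENNReal.ofReal (|f y - ballAvg n f x₀ r| / ‖x - y‖ ^ ((n : ℝ) - 1)) ≤
      ENNReal.ofReal (annulusConst n α * (campanato1Norm n α f).toReal *
        (2 ^ j * r * ∑ k ∈ range (j + 2), ((2 : ℝ) ^ k * r) ^ α)) := by
  have hn₀ : n ≠ 0 := by omega
  have := unitBallVolume_pos n
  set M := (campanato1Norm n α f).toReal
  set S := ∑ k ∈ range (j + 2), ((2 : ℝ) ^ k * r) ^ α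
  refine (lintegral_shell_le hn hloc x (by positivity) _).trans (ENNReal.ofReal_le_ofReal ?_)
  have hrad : 2 * (2 ^ j * r) = 2 ^ (j + 1) * r := by ring
  have hosc : meanOscillation n f x (2 * (2 ^ j * r)) ≤ unitBallVolume n ^ (α / n) * M * S := by
    rw [hrad]
    refine (meanOscillation_le_of_campanato1Norm_ne_top hn₀ hf x (by positivity)).trans ?_
    rw [mul_right_comm]
    exact mul_le_mul_of_nonneg_left
      (single_le_sum (f := fun k => ((2 : ℝ) ^ k * r) ^ α) (fun k _ => by positivity)
        (self_mem_range_succ (j + 1))) (by positivity)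
  have hchain := hrad ▸ abs_ballAvg_dyadic_sub_ballAvg_le hn₀ hloc hf hr hx j
  calc 2 ^ n * unitBallVolume n * (2 ^ j * r) * (meanOscillation n f x (2 * (2 ^ j * r)) +
        |ballAvg n f x (2 * (2 ^ j * r)) - ballAvg n f x₀ r|)
      ≤ 2 ^ n * unitBallVolume n * (2 ^ j * r) *
        (unitBallVolume n ^ (α / n) * M * S + 2 ^ n * (unitBallVolume n ^ (α / n) * M) * S) := by
        gcongr
    _ = annulusConst n α * M * (2 ^ j * r * S) := by unfold annulusConst; ring

lemma lintegral_annulus_le (hn : 1 ≤ n) (hloc : LocallyIntegrable f volume)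
    (hf : campanato1Norm n α f ≠ ⊤) (hr : 0 < r) (hx : x ∈ closedBall x₀ r) {t : ℝ}
    (hrt : 8 * r < t) {B : ℝ}
    (hB : ∀ J : ℕ, 2 ^ J * r ≤ t → t < 2 ^ (J + 1) * r → dyadicSum α r J ≤ B) :
    ∫⁻ y in {y | 8 * r ≤ ‖x - y‖ ∧ ‖x - y‖ < t},
        ENNReal.ofReal (|f y - ballAvg n f x₀ r| / ‖x - y‖ ^ ((n : ℝ) - 1)) ≤
      ENNReal.ofReal (annulusConst n α * B * (campanato1Norm n α f).toReal) := by
  obtain ⟨J, hJ, hJ'⟩ := exists_pow_two_mul_le_lt hr (by linarith)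
  set M := (campanato1Norm n α f).toReal
  set shell : ℕ → Set (EuclideanSpace ℝ (Fin n)) :=
    fun j => {y | 2 ^ j * r ≤ ‖x - y‖ ∧ ‖x - y‖ < 2 * (2 ^ j * r)}
  have hcover : {y | 8 * r ≤ ‖x - y‖ ∧ ‖x - y‖ < t} ⊆ ⋃ j ∈ range (J + 1), shell j := by
    rintro y ⟨h8, ht⟩
    obtain ⟨j, hj, hy⟩ := exists_mem_dyadic_shell hr (by linarith) ht hJ'.le
    exact Set.mem_iUnion₂.2 ⟨j, mem_range.2 hj, hy⟩
  have := annulusConst_pos n α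
  calc _ ≤ ∫⁻ y in ⋃ j ∈ range (J + 1), shell j,
          ENNReal.ofReal (|f y - ballAvg n f x₀ r| / ‖x - y‖ ^ ((n : ℝ) - 1)) :=
        lintegral_mono_set hcover
    _ ≤ ∑ j ∈ range (J + 1), ∫⁻ y in shell j,
          ENNReal.ofReal (|f y - ballAvg n f x₀ r| / ‖x - y‖ ^ ((n : ℝ) - 1)) :=
        setLIntegral_biUnion_finset_le _ _ _ _
    _ ≤ ∑ j ∈ range (J + 1), ENNReal.ofReal (annulusConst n α * M *
          (2 ^ j * r * ∑ k ∈ range (j + 2), ((2 : ℝ) ^ k * r) ^ α)) :=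
        sum_le_sum fun j _ => lintegral_dyadic_shell_le hn hloc hf hr hx j
    _ = ENNReal.ofReal (annulusConst n α * M * dyadicSum α r J) := by
        rw [← ENNReal.ofReal_sum_of_nonneg fun j _ => by positivity, dyadicSum, mul_sum]
    _ ≤ ENNReal.ofReal (annulusConst n α * B * M) := by
        rw [mul_right_comm]
        gcongr
        exact hB J hJ hJ'

end Annulus

/-- annulus integral of |f - f_B| / |x-y|^{n-1}. -/
theorem stmt5 (n : ℕ) (hn : 1 ≤ n) (α : ℝ) :
    ∃ c > (0 : ℝ), ∀ f : EuclideanSpace ℝ (Fin n) → ℝ, LocallyIntegrable f volume →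
      campanato1Norm n α f < ⊤ →
    ∀ (x₀ x : EuclideanSpace ℝ (Fin n)) (r t : ℝ), 0 < r → x ∈ closedBall x₀ r →
      8 * r < t →
      ((α < 0 →
        ∫⁻ y in {y : EuclideanSpace ℝ (Fin n) | 8 * r ≤ ‖x - y‖ ∧ ‖x - y‖ < t},
            ENNReal.ofReal (|f y - ballAvg n f x₀ r| / ‖x - y‖ ^ ((n : ℝ) - 1)) ≤
          ENNReal.ofReal (c * t * r ^ α * (campanato1Norm n α f).toReal)) ∧
      (α = 0 →
        ∫⁻ y in {y : EuclideanSpace ℝ (Fin n) | 8 * r ≤ ‖x - y‖ ∧ ‖x - y‖ < t},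
            ENNReal.ofReal (|f y - ballAvg n f x₀ r| / ‖x - y‖ ^ ((n : ℝ) - 1)) ≤
          ENNReal.ofReal (c * t * Real.log (t / r) * (campanato1Norm n α f).toReal)) ∧
      (0 < α →
        ∫⁻ y in {y : EuclideanSpace ℝ (Fin n) | 8 * r ≤ ‖x - y‖ ∧ ‖x - y‖ < t},
            ENNReal.ofReal (|f y - ballAvg n f x₀ r| / ‖x - y‖ ^ ((n : ℝ) - 1)) ≤
          ENNReal.ofReal (c * t ^ (1 + α) * (campanato1Norm n α f).toReal))) := by
  have hC := annulusConst_pos n α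
  rcases lt_trichotomy α 0 with hα | rfl | hα
  · have hq : 0 < 1 - (2 : ℝ) ^ α := sub_pos.2 (Real.rpow_lt_one_of_one_lt_of_neg one_lt_two hα)
    refine ⟨annulusConst n α * (2 * (1 - 2 ^ α)⁻¹), by positivity,
      fun f hloc hf x₀ x r t hr hx hrt =>
        ⟨fun _ => ?_, fun h => absurd h hα.ne, fun h => absurd h hα.not_gt⟩⟩
    refine (lintegral_annulus_le hn hloc hf.ne hr hx hrt
      fun J hJ _ => dyadicSum_le_of_neg hα hr hJ).trans_eq (congrArg ENNReal.ofReal (by ring))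
  · refine ⟨annulusConst n 0 * 6, by positivity, fun f hloc hf x₀ x r t hr hx hrt =>
      ⟨fun h => absurd h (lt_irrefl 0), fun _ => ?_, fun h => absurd h (lt_irrefl 0)⟩⟩
    refine (lintegral_annulus_le hn hloc hf.ne hr hx hrt
      fun J hJ hJ' => dyadicSum_zero_le hr hrt hJ hJ').trans_eq (congrArg ENNReal.ofReal (by ring))
  · have hq : 0 < (2 : ℝ) ^ α - 1 := sub_pos.2 (Real.one_lt_rpow one_lt_two hα)
    refine ⟨annulusConst n α * (2 * (2 ^ α) ^ 3 * (2 ^ α - 1)⁻¹), by positivity,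
      fun f hloc hf x₀ x r t hr hx hrt =>
        ⟨fun h => absurd h hα.not_gt, fun h => absurd h hα.ne', fun _ => ?_⟩⟩
    refine (lintegral_annulus_le hn hloc hf.ne hr hx hrt
      fun J hJ _ => dyadicSum_le_of_pos hα hr hJ).trans_eq (congrArg ENNReal.ofReal (by ring))
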